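/- arXiv:2410.02601 — 5 statements merged into one kernel-verified Lean document; each statement's English description precedes it below -/
import Mathlib

section
/- Let μ, μ' ∈ ℝ, σ, σ' > 0, ρ ∈ (-1,1), and let q be the bivariate Gaussian density with means (μ, μ'), variances σ², σ'² and correlation ρ. Set χ = Ξ(ρ, σ, σ') = ρ/(σσ'(1-ρ²)). Then q is the unique minimizer, over all probability densities q' on ℝ² whose first marginal is the Gaussian density N(μ, σ²), whose second marginal is the Gaussian density N(μ', σ'²), and which have finite second moments and finite differential entropy, of the functional q' ↦ ∫ (χ/2)·(x₀ - x₁)² q'(x₀,x₁) dx₀dx₁ - H(q'); that is, for any such q' that differs from q on a set of positive Lebesgue measure, ∫ (χ/2)(x₀-x₁)² q' dx - H(q') > ∫ (χ/2)(x₀-x₁)² q dx - H(q). -/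
/-!
With `c x = χ/2 (x₁ - x₂)²`, the value `χ = ρ/(σσ'(1-ρ²))` makes the cross term `-χ x₁ x₂` of `c`
cancel the correlation term of `log q`, so `c + log q` is a polynomial in `x₁` plus a polynomial
in `x₂`. Its integral against a density `p` with the prescribed Gaussian marginals is therefore
the same for every such `p`, and the objective `∫ c p + ∫ p log p` equals that constant plus
`∫ p log (p / q)`. By Gibbs' inequality the latter is positive unless `p = q` almost everywhere.
-/

open MeasureTheory

/-- The 1D Gaussian density `N(μ, σ²)`. -/
noncomputable def gauss1 (μ σ x : ℝ) : ℝ :=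
  (Real.sqrt (2 * Real.pi * σ ^ 2))⁻¹ * Real.exp (-(x - μ) ^ 2 / (2 * σ ^ 2))

/-- The bivariate Gaussian density with means `(μ, μ')`, variances `σ², σ'²` and
correlation `ρ`. -/
noncomputable def biGauss (μ μ' σ σ' ρ : ℝ) (x : ℝ × ℝ) : ℝ :=
  (2 * Real.pi * σ * σ' * Real.sqrt (1 - ρ ^ 2))⁻¹ *
    Real.exp (-((x.1 - μ) ^ 2 / σ ^ 2 - 2 * ρ * (x.1 - μ) * (x.2 - μ') / (σ * σ')
      + (x.2 - μ') ^ 2 / σ' ^ 2) / (2 * (1 - ρ ^ 2)))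

/-- Differential entropy `H(f) = -∫ f log f` of a density on `ℝ²`. -/
noncomputable def diffEntropy2 (f : ℝ × ℝ → ℝ) : ℝ :=
  -∫ x : ℝ × ℝ, f x * Real.log (f x)

open Polynomial ProbabilityTheory InformationTheory

section Gibbs

variable {α : Type*} [MeasurableSpace α]

lemma mul_klFun_div {p q : ℝ} (hq : q ≠ 0) :
    q * klFun (p / q) = p * Real.log p - p * Real.log q - p + q := by
  rcases eq_or_ne p 0 with rfl | hp
  · simp [klFun]
  · rw [klFun, Real.log_div hp hq]
    field_simp
    ring

lemma integral_mul_log_lt_integral_mul_log {μ : Measure α} {p q : α → ℝ}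
    (hp0 : ∀ x, 0 ≤ p x) (hq0 : ∀ x, 0 < q x) (hp : Integrable p μ) (hq : Integrable q μ)
    (hpq : ∫ x, p x ∂μ = ∫ x, q x ∂μ) (hplogp : Integrable (fun x => p x * Real.log (p x)) μ)
    (hplogq : Integrable (fun x => p x * Real.log (q x)) μ) (hne : ¬ p =ᵐ[μ] q) :
    ∫ x, p x * Real.log (q x) ∂μ < ∫ x, p x * Real.log (p x) ∂μ := by
  set h := fun x => q x * klFun (p x / q x) with hh
  have h_eq : h = fun x => p x * Real.log (p x) - p x * Real.log (q x) - p x + q x :=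
    funext fun x => mul_klFun_div (hq0 x).ne'
  have h_nonneg : ∀ x, 0 ≤ h x := fun x =>
    mul_nonneg (hq0 x).le (klFun_nonneg (div_nonneg (hp0 x) (hq0 x).le))
  have h_support : Function.support h = {x | p x ≠ q x} := by
    ext x
    simp [hh, (hq0 x).ne', klFun_eq_zero_iff (div_nonneg (hp0 x) (hq0 x).le),
      div_eq_one_iff_eq]
  have hd : Integrable (fun x => p x * Real.log (p x) - p x * Real.log (q x)) μ :=
    hplogp.sub hplogq
  have hdp : Integrable (fun x => p x * Real.log (p x) - p x * Real.log (q x) - p x) μ :=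
    hd.sub hp
  have h_pos : 0 < ∫ x, h x ∂μ := by
    rw [integral_pos_iff_support_of_nonneg_ae (ae_of_all _ h_nonneg) (h_eq ▸ hdp.add hq),
      h_support, pos_iff_ne_zero]
    exact hne
  rw [h_eq, integral_add hdp hq, integral_sub hd hp, integral_sub hplogp hplogq, hpq] at h_pos
  linarith

end Gibbs

section Coupling

variable {α β : Type*} [MeasurableSpace α] [MeasurableSpace β]

structure IsCouplingDensity (μ : Measure α) (ν : Measure β) (m₀ : α → ℝ) (m₁ : β → ℝ)
    (p : α × β → ℝ) : Prop where
  integrable : Integrable p (μ.prod ν)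
  nonneg : ∀ z, 0 ≤ p z
  fst_marginal : ∀ᵐ x ∂μ, ∫ y, p (x, y) ∂ν = m₀ x
  snd_marginal : ∀ᵐ y ∂ν, ∫ x, p (x, y) ∂μ = m₁ y

namespace IsCouplingDensity

variable {μ : Measure α} {ν : Measure β} [SFinite μ] [SFinite ν] {m₀ : α → ℝ} {m₁ : β → ℝ}
  {p : α × β → ℝ}

lemma swap (hp : IsCouplingDensity μ ν m₀ m₁ p) :
    IsCouplingDensity ν μ m₁ m₀ (p ∘ Prod.swap) :=
  ⟨hp.integrable.swap, fun z => hp.nonneg z.swap, hp.snd_marginal, hp.fst_marginal⟩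

lemma integrable_comp_fst_mul (hp : IsCouplingDensity μ ν m₀ m₁ p) {f : α → ℝ}
    (hf : AEStronglyMeasurable f μ) (hfm : Integrable (fun x => f x * m₀ x) μ) :
    Integrable (fun z => f z.1 * p z) (μ.prod ν) := by
  refine (integrable_prod_iff (f := fun z => f z.1 * p z)
    (hf.comp_fst.mul hp.integrable.1)).2 ⟨?_, ?_⟩
  · filter_upwards [hp.integrable.prod_right_ae] with x hx using hx.const_mul (f x)
  · refine hfm.norm.congr ?_
    filter_upwards [hp.fst_marginal] with x hx
    have hm : 0 ≤ m₀ x := hx ▸ integral_nonneg fun y => hp.nonneg (x, y)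
    simp only [norm_mul, Real.norm_of_nonneg hm, Real.norm_of_nonneg (hp.nonneg _)]
    rw [integral_const_mul, hx]

lemma integral_comp_fst_mul (hp : IsCouplingDensity μ ν m₀ m₁ p) {f : α → ℝ}
    (hfp : Integrable (fun z => f z.1 * p z) (μ.prod ν)) :
    ∫ z, f z.1 * p z ∂(μ.prod ν) = ∫ x, f x * m₀ x ∂μ := by
  rw [integral_prod _ hfp]
  refine integral_congr_ae ?_
  filter_upwards [hp.fst_marginal] with x hx
  rw [integral_const_mul, hx]

lemma integrable_comp_snd_mul (hp : IsCouplingDensity μ ν m₀ m₁ p) {g : β → ℝ}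
    (hg : AEStronglyMeasurable g ν) (hgm : Integrable (fun y => g y * m₁ y) ν) :
    Integrable (fun z => g z.2 * p z) (μ.prod ν) :=
  (hp.swap.integrable_comp_fst_mul hg hgm).swap

lemma integral_comp_snd_mul (hp : IsCouplingDensity μ ν m₀ m₁ p) {g : β → ℝ}
    (hgp : Integrable (fun z => g z.2 * p z) (μ.prod ν)) :
    ∫ z, g z.2 * p z ∂(μ.prod ν) = ∫ y, g y * m₁ y ∂ν := by
  rw [← hp.swap.integral_comp_fst_mul hgp.swap]
  exact (integral_prod_swap _).symm

end IsCouplingDensity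

end Coupling

lemma gauss1_eq_gaussianPDFReal (m s : ℝ) :
    gauss1 m s = gaussianPDFReal m (⟨s ^ 2, sq_nonneg s⟩ : NNReal) := rfl

lemma integrable_gauss1 (m s : ℝ) : Integrable (gauss1 m s) := by
  rw [gauss1_eq_gaussianPDFReal]
  exact integrable_gaussianPDFReal _ _

lemma integral_gauss1 (m : ℝ) {s : ℝ} (hs : s ≠ 0) : ∫ u, gauss1 m s u = 1 := by
  rw [gauss1_eq_gaussianPDFReal]
  refine integral_gaussianPDFReal_eq_one m ?_
  exact NNReal.coe_ne_zero.1 (pow_ne_zero 2 hs)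

lemma integrable_eval_gaussianReal (P : ℝ[X]) (m : ℝ) (v : NNReal) :
    Integrable (fun u => P.eval u) (gaussianReal m v) := by
  induction P using Polynomial.induction_on' with
  | add P Q hP hQ => simp only [eval_add]; exact hP.add hQ
  | monomial n a =>
    simp only [eval_monomial]
    refine Integrable.const_mul ?_ a
    refine ((memLp_id_gaussianReal' n (ENNReal.natCast_ne_top n)).integrable_norm_pow').mono
      (by fun_prop) (ae_of_all _ fun u => ?_)
    simp

lemma integrable_eval_mul_gauss1 (P : ℝ[X]) (m s : ℝ) :
    Integrable (fun u => P.eval u * gauss1 m s u) := by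
  rw [gauss1_eq_gaussianPDFReal]
  set v : NNReal := ⟨s ^ 2, sq_nonneg s⟩
  rcases eq_or_ne v 0 with hv | hv
  · simp [hv]
  have hP := integrable_eval_gaussianReal P m v
  rw [gaussianReal_of_var_ne_zero m hv, integrable_withDensity_iff_integrable_smul'
    (measurable_gaussianPDF m v) (ae_of_all _ fun _ => gaussianPDF_lt_top)] at hP
  simpa [toReal_gaussianPDF, mul_comm] using hP

section BiGauss

variable {μ μ' σ σ' ρ : ℝ}

lemma one_sub_sq_pos_of_mem_Ioo (hρ : ρ ∈ Set.Ioo (-1 : ℝ) 1) : 0 < 1 - ρ ^ 2 := by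
  obtain ⟨h₁, h₂⟩ := hρ
  nlinarith

lemma biGauss_pos (hσ : 0 < σ) (hσ' : 0 < σ') (hρ : ρ ∈ Set.Ioo (-1 : ℝ) 1) (x : ℝ × ℝ) :
    0 < biGauss μ μ' σ σ' ρ x := by
  have := Real.sqrt_pos.2 (one_sub_sq_pos_of_mem_Ioo hρ)
  unfold biGauss
  positivity

lemma biGauss_swap (x : ℝ × ℝ) : biGauss μ μ' σ σ' ρ x = biGauss μ' μ σ' σ ρ x.swap := by
  simp only [biGauss, Prod.fst_swap, Prod.snd_swap]
  ring_nf

lemma biGauss_eq_gauss1_mul_gauss1 (hσ : 0 < σ) (hσ' : 0 < σ') (hρ : ρ ∈ Set.Ioo (-1 : ℝ) 1)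
    (x : ℝ × ℝ) :
    biGauss μ μ' σ σ' ρ x =
      gauss1 μ σ x.1 * gauss1 (μ' + ρ * σ' / σ * (x.1 - μ)) (σ' * Real.sqrt (1 - ρ ^ 2)) x.2 := by
  have ht := one_sub_sq_pos_of_mem_Ioo hρ
  have h2π : (0 : ℝ) < 2 * Real.pi := by positivity
  simp only [biGauss, gauss1]
  rw [mul_mul_mul_comm, ← Real.exp_add, Real.sqrt_mul h2π.le, Real.sqrt_mul h2π.le,
    Real.sqrt_sq hσ.le, Real.sqrt_sq (by positivity), ← mul_inv, mul_pow, Real.sq_sqrt ht.le]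
  congr 1
  · congr 1
    linear_combination (-(σ * (σ' * Real.sqrt (1 - ρ ^ 2)))) * Real.mul_self_sqrt h2π.le
  · congr 1
    field_simp
    ring

lemma integral_biGauss_fst (hσ : 0 < σ) (hσ' : 0 < σ') (hρ : ρ ∈ Set.Ioo (-1 : ℝ) 1) (x : ℝ) :
    ∫ y, biGauss μ μ' σ σ' ρ (x, y) = gauss1 μ σ x := by
  have hs : 0 < σ' * Real.sqrt (1 - ρ ^ 2) :=
    mul_pos hσ' (Real.sqrt_pos.2 (one_sub_sq_pos_of_mem_Ioo hρ))
  simp only [biGauss_eq_gauss1_mul_gauss1 hσ hσ' hρ]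
  rw [integral_const_mul, integral_gauss1 _ hs.ne', mul_one]

lemma integral_biGauss_snd (hσ : 0 < σ) (hσ' : 0 < σ') (hρ : ρ ∈ Set.Ioo (-1 : ℝ) 1) (y : ℝ) :
    ∫ x, biGauss μ μ' σ σ' ρ (x, y) = gauss1 μ' σ' y := by
  simp only [biGauss_swap (μ := μ), Prod.swap_prod_mk]
  exact integral_biGauss_fst hσ' hσ hρ y

lemma integrable_biGauss (hσ : 0 < σ) (hσ' : 0 < σ') (hρ : ρ ∈ Set.Ioo (-1 : ℝ) 1) :
    Integrable (biGauss μ μ' σ σ' ρ) := by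
  have hmeas : Measurable (biGauss μ μ' σ σ' ρ) := by unfold biGauss; fun_prop
  refine (integrable_prod_iff hmeas.aestronglyMeasurable).2 ⟨ae_of_all _ fun x => ?_, ?_⟩
  · simp only [biGauss_eq_gauss1_mul_gauss1 hσ hσ' hρ]
    exact (integrable_gauss1 _ _).const_mul _
  · simp only [Real.norm_of_nonneg (biGauss_pos hσ hσ' hρ _).le, integral_biGauss_fst hσ hσ' hρ]
    exact integrable_gauss1 _ _

lemma isCouplingDensity_biGauss (hσ : 0 < σ) (hσ' : 0 < σ') (hρ : ρ ∈ Set.Ioo (-1 : ℝ) 1) :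
    IsCouplingDensity volume volume (gauss1 μ σ) (gauss1 μ' σ') (biGauss μ μ' σ σ' ρ) :=
  ⟨integrable_biGauss hσ hσ' hρ, fun x => (biGauss_pos hσ hσ' hρ x).le,
    ae_of_all _ (integral_biGauss_fst hσ hσ' hρ), ae_of_all _ (integral_biGauss_snd hσ hσ' hρ)⟩

lemma integral_biGauss (hσ : 0 < σ) (hσ' : 0 < σ') (hρ : ρ ∈ Set.Ioo (-1 : ℝ) 1) :
    ∫ x, biGauss μ μ' σ σ' ρ x = 1 := by
  rw [Measure.volume_eq_prod, integral_prod _ (integrable_biGauss hσ hσ' hρ)]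
  simp only [integral_biGauss_fst hσ hσ' hρ]
  exact integral_gauss1 μ hσ.ne'

end BiGauss

section Potential

variable {μ μ' σ σ' ρ : ℝ}

lemma log_biGauss (hσ : 0 < σ) (hσ' : 0 < σ') (hρ : ρ ∈ Set.Ioo (-1 : ℝ) 1) (x : ℝ × ℝ) :
    Real.log (biGauss μ μ' σ σ' ρ x) =
      -Real.log (2 * Real.pi * σ * σ' * Real.sqrt (1 - ρ ^ 2)) -
        ((x.1 - μ) ^ 2 / σ ^ 2 - 2 * ρ * (x.1 - μ) * (x.2 - μ') / (σ * σ')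
          + (x.2 - μ') ^ 2 / σ' ^ 2) / (2 * (1 - ρ ^ 2)) := by
  have := Real.sqrt_pos.2 (one_sub_sq_pos_of_mem_Ioo hρ)
  rw [biGauss, Real.log_mul (by positivity) (Real.exp_ne_zero _), Real.log_inv, Real.log_exp]
  ring

lemma exists_sq_sub_add_log_biGauss_eq_eval_add_eval (hσ : 0 < σ) (hσ' : 0 < σ')
    (hρ : ρ ∈ Set.Ioo (-1 : ℝ) 1) :
    ∃ P Q : ℝ[X], ∀ x : ℝ × ℝ,
      ρ / (σ * σ' * (1 - ρ ^ 2)) / 2 * (x.1 - x.2) ^ 2 + Real.log (biGauss μ μ' σ σ' ρ x) =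
        P.eval x.1 + Q.eval x.2 := by
  set χ := ρ / (σ * σ' * (1 - ρ ^ 2)) with hχ
  have ht := one_sub_sq_pos_of_mem_Ioo hρ
  refine ⟨C (χ / 2) * X ^ 2 - C (χ * μ') * X - C (1 / (2 * (1 - ρ ^ 2) * σ ^ 2)) * (X - C μ) ^ 2
      + C (χ * μ * μ' - Real.log (2 * Real.pi * σ * σ' * Real.sqrt (1 - ρ ^ 2))),
    C (χ / 2) * X ^ 2 - C (χ * μ) * X - C (1 / (2 * (1 - ρ ^ 2) * σ' ^ 2)) * (X - C μ') ^ 2,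
    fun x => ?_⟩
  rw [log_biGauss hσ hσ' hρ, hχ]
  simp only [eval_add, eval_sub, eval_mul, eval_C, eval_X, eval_pow]
  field_simp
  ring

lemma IsCouplingDensity.integrable_sq_sub_mul {p : ℝ × ℝ → ℝ}
    (hp : IsCouplingDensity volume volume (gauss1 μ σ) (gauss1 μ' σ') p) :
    Integrable (fun x : ℝ × ℝ => (x.1 - x.2) ^ 2 * p x) := by
  have hsq (m s : ℝ) : Integrable (fun u => u ^ 2 * gauss1 m s u) := by
    have h := integrable_eval_mul_gauss1 (X ^ 2) m s
    simp only [eval_pow, eval_X] at h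
    exact h
  have h₁ := hp.integrable_comp_fst_mul (f := fun u => u ^ 2) (by fun_prop) (hsq μ σ)
  have h₂ := hp.integrable_comp_snd_mul (g := fun u => u ^ 2) (by fun_prop) (hsq μ' σ')
  refine ((h₁.add h₂).const_mul 2).mono'
    ((by fun_prop : Continuous fun x : ℝ × ℝ => (x.1 - x.2) ^ 2).aestronglyMeasurable.mul
      hp.integrable.1) (ae_of_all _ fun x => ?_)
  rw [Real.norm_of_nonneg (mul_nonneg (sq_nonneg _) (hp.nonneg x))]
  change _ ≤ 2 * (x.1 ^ 2 * p x + x.2 ^ 2 * p x)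
  nlinarith [hp.nonneg x, mul_nonneg (sq_nonneg (x.1 + x.2)) (hp.nonneg x)]

lemma exists_integral_sq_sub_mul_add_integral_mul_log_biGauss (hσ : 0 < σ) (hσ' : 0 < σ')
    (hρ : ρ ∈ Set.Ioo (-1 : ℝ) 1) :
    ∃ V : ℝ, ∀ p : ℝ × ℝ → ℝ,
      IsCouplingDensity volume volume (gauss1 μ σ) (gauss1 μ' σ') p →
        Integrable (fun x => p x * Real.log (biGauss μ μ' σ σ' ρ x)) ∧
        (∫ x : ℝ × ℝ, ρ / (σ * σ' * (1 - ρ ^ 2)) / 2 * (x.1 - x.2) ^ 2 * p x) +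
          ∫ x, p x * Real.log (biGauss μ μ' σ σ' ρ x) = V := by
  obtain ⟨P, Q, hPQ⟩ :=
    exists_sq_sub_add_log_biGauss_eq_eval_add_eval (μ := μ) (μ' := μ') hσ hσ' hρ
  refine ⟨(∫ u, P.eval u * gauss1 μ σ u) + ∫ u, Q.eval u * gauss1 μ' σ' u, fun p hp => ?_⟩
  have hcost := hp.integrable_sq_sub_mul.const_mul (ρ / (σ * σ' * (1 - ρ ^ 2)) / 2)
  have hP : Integrable (fun x : ℝ × ℝ => P.eval x.1 * p x) :=
    hp.integrable_comp_fst_mul P.continuous.aestronglyMeasurable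
      (integrable_eval_mul_gauss1 P μ σ)
  have hQ : Integrable (fun x : ℝ × ℝ => Q.eval x.2 * p x) :=
    hp.integrable_comp_snd_mul Q.continuous.aestronglyMeasurable
      (integrable_eval_mul_gauss1 Q μ' σ')
  have hPQ' : Integrable (fun x : ℝ × ℝ => P.eval x.1 * p x + Q.eval x.2 * p x) := hP.add hQ
  have hPV : ∫ x : ℝ × ℝ, P.eval x.1 * p x = ∫ u, P.eval u * gauss1 μ σ u :=
    hp.integral_comp_fst_mul (f := P.eval) hP
  have hQV : ∫ x : ℝ × ℝ, Q.eval x.2 * p x = ∫ u, Q.eval u * gauss1 μ' σ' u :=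
    hp.integral_comp_snd_mul (g := Q.eval) hQ
  have hlog : (fun x => p x * Real.log (biGauss μ μ' σ σ' ρ x)) = fun x =>
      (P.eval x.1 * p x + Q.eval x.2 * p x) -
        ρ / (σ * σ' * (1 - ρ ^ 2)) / 2 * ((x.1 - x.2) ^ 2 * p x) := by
    funext x
    linear_combination p x * hPQ x
  refine ⟨hlog ▸ hPQ'.sub hcost, ?_⟩
  rw [hlog, integral_sub hPQ' hcost, integral_add hP hQ, hPV, hQV]
  simp only [mul_assoc]
  ring

end Potential

theorem biGauss_unique_EOT_minimizer_general (μ μ' σ σ' ρ χ : ℝ)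
    (hσ : 0 < σ) (hσ' : 0 < σ') (hρ : ρ ∈ Set.Ioo (-1 : ℝ) 1)
    (hχ : χ = ρ / (σ * σ' * (1 - ρ ^ 2)))
    (q' : ℝ × ℝ → ℝ)
    (hq'nonneg : ∀ x, 0 ≤ q' x)
    (hq'prob : ∫ x : ℝ × ℝ, q' x = 1)
    (hmarg0 : ∀ᵐ x₀ ∂(volume : Measure ℝ), (∫ x₁ : ℝ, q' (x₀, x₁)) = gauss1 μ σ x₀)
    (hmarg1 : ∀ᵐ x₁ ∂(volume : Measure ℝ), (∫ x₀ : ℝ, q' (x₀, x₁)) = gauss1 μ' σ' x₁)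
    (hent : Integrable (fun x : ℝ × ℝ => q' x * Real.log (q' x)))
    (hne : ¬ (q' =ᵐ[(volume : Measure (ℝ × ℝ))] biGauss μ μ' σ σ' ρ)) :
    (∫ x : ℝ × ℝ, χ / 2 * (x.1 - x.2) ^ 2 * biGauss μ μ' σ σ' ρ x) -
        diffEntropy2 (biGauss μ μ' σ σ' ρ) <
      (∫ x : ℝ × ℝ, χ / 2 * (x.1 - x.2) ^ 2 * q' x) - diffEntropy2 q' := by
  subst hχ
  have hq'int : Integrable q' := .of_integral_ne_zero (by rw [hq'prob]; exact one_ne_zero)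
  have hq' : IsCouplingDensity volume volume (gauss1 μ σ) (gauss1 μ' σ') q' :=
    ⟨hq'int, hq'nonneg, hmarg0, hmarg1⟩
  have hq := isCouplingDensity_biGauss (μ := μ) (μ' := μ') hσ hσ' hρ
  obtain ⟨V, hV⟩ :=
    exists_integral_sq_sub_mul_add_integral_mul_log_biGauss (μ := μ) (μ' := μ') hσ hσ' hρ
  obtain ⟨hq'log, hq'V⟩ := hV q' hq'
  have hqV := (hV _ hq).2
  have gibbs := integral_mul_log_lt_integral_mul_log (μ := volume) hq'nonneg
    (biGauss_pos hσ hσ' hρ) hq'int (integrable_biGauss hσ hσ' hρ)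
    (by rw [hq'prob, integral_biGauss hσ hσ' hρ]) hent hq'log hne
  unfold diffEntropy2
  linarith

/-- The bivariate Gaussian density `q` with means `(μ, μ')`, variances
`σ², σ'²` and correlation `ρ ∈ (-1,1)` is, with `χ = Ξ(ρ, σ, σ') = ρ/(σσ'(1-ρ²))`, the
unique minimizer of `q' ↦ ∫ (χ/2)(x₀-x₁)² q' - H(q')` over all probability densities
on `ℝ²` with Gaussian marginals `N(μ, σ²)`, `N(μ', σ'²)`, finite second moments and
finite differential entropy: any such `q'` differing from `q` on a set of positive
Lebesgue measure has strictly larger objective value. -/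
theorem biGauss_unique_EOT_minimizer (μ μ' σ σ' ρ χ : ℝ)
    (hσ : 0 < σ) (hσ' : 0 < σ') (hρ : ρ ∈ Set.Ioo (-1 : ℝ) 1)
    (hχ : χ = ρ / (σ * σ' * (1 - ρ ^ 2)))
    (q' : ℝ × ℝ → ℝ)
    (hq'meas : Measurable q')
    (hq'nonneg : ∀ x, 0 ≤ q' x)
    (hq'prob : ∫ x : ℝ × ℝ, q' x = 1)
    (hmarg0 : ∀ᵐ x₀ ∂(volume : Measure ℝ), (∫ x₁ : ℝ, q' (x₀, x₁)) = gauss1 μ σ x₀)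
    (hmarg1 : ∀ᵐ x₁ ∂(volume : Measure ℝ), (∫ x₀ : ℝ, q' (x₀, x₁)) = gauss1 μ' σ' x₁)
    (hmom : Integrable (fun x : ℝ × ℝ => (x.1 ^ 2 + x.2 ^ 2) * q' x))
    (hent : Integrable (fun x : ℝ × ℝ => q' x * Real.log (q' x)))
    (hne : ¬ (q' =ᵐ[(volume : Measure (ℝ × ℝ))] biGauss μ μ' σ σ' ρ)) :
    (∫ x : ℝ × ℝ, χ / 2 * (x.1 - x.2) ^ 2 * biGauss μ μ' σ σ' ρ x) -
        diffEntropy2 (biGauss μ μ' σ σ' ρ) <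
      (∫ x : ℝ × ℝ, χ / 2 * (x.1 - x.2) ^ 2 * q' x) - diffEntropy2 q' :=
  biGauss_unique_EOT_minimizer_general μ μ' σ σ' ρ χ hσ hσ' hρ hχ q' hq'nonneg hq'prob hmarg0 hmarg1
    hent hne
end

section
/- Fix σ, σ' > 0. Let ρ* ∈ [0,1), ρ ∈ (-1,1), γ ∈ [0,1), and let ρ_new ∈ (-1,1) be a point lying on the closed segment between ρ* and ρ with |ρ_new - ρ*| ≤ γ·|ρ - ρ*|. Set m = max{ρ*, |ρ|} and l = 1 - (1-γ)·(1 - m²)²/(1 + m²). Then l < 1 and |Ξ(ρ_new, σ, σ') - Ξ(ρ*, σ, σ')| ≤ l · |Ξ(ρ, σ, σ') - Ξ(ρ*, σ, σ')|. -/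
/-- The optimality coefficient `Ξ(ρ, σ, σ') = ρ / (σσ'(1 - ρ²))`. -/
noncomputable def Xi (ρ σ σ' : ℝ) : ℝ := ρ / (σ * σ' * (1 - ρ ^ 2))

/-!
`Ξ(·, σ, σ')` is `ρ ↦ ρ / (1 - ρ²)` divided by `σσ'`, and the difference quotients of that map,
`(1 + ab) / ((1 - a²)(1 - b²))`, lie between `1` and `(1 + m²) / (1 - m²)²` on `[-m, m]`.
Being increasing, `Ξ` splits `|Ξ ρ - Ξ ρ*|` as `|Ξ ρ - Ξ ρ_new| + |Ξ ρ_new - Ξ ρ*|`; the first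
part is at least `(1 - γ)|ρ - ρ*| / (σσ')`, hence at least the fraction `(1 - γ)(1 - m²)² / (1 + m²)`
of the whole.
-/

open Set

lemma abs_sub_eq_abs_sub_add_abs_sub_of_mem_uIcc {a b c : ℝ} (h : c ∈ uIcc a b) :
    |a - b| = |a - c| + |c - b| := by
  have := dist_add_dist_of_mem_segment (segment_eq_uIcc a b ▸ h)
  simpa only [Real.dist_eq, eq_comm] using this

theorem abs_sub_le_of_mem_uIcc_of_lipschitz_bounds {g : ℝ → ℝ} {x y z γ c C : ℝ}
    (hg : MonotoneOn g (uIcc y x)) (hz : z ∈ uIcc y x) (hzy : |z - y| ≤ γ * |x - y|)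
    (hγ : γ ≤ 1) (hc : 0 ≤ c) (hC : 0 < C)
    (hlow : c * |x - z| ≤ |g x - g z|) (hup : |g x - g y| ≤ C * |x - y|) :
    |g z - g y| ≤ (1 - (1 - γ) * c / C) * |g x - g y| := by
  have hsplit : |g x - g y| = |g x - g z| + |g z - g y| :=
    abs_sub_eq_abs_sub_add_abs_sub_of_mem_uIcc
      (uIcc_comm (g y) (g x) ▸ hg.mapsTo_uIcc hz)
  have hxz : (1 - γ) * |x - y| ≤ |x - z| := by
    have := abs_sub_eq_abs_sub_add_abs_sub_of_mem_uIcc (uIcc_comm y x ▸ hz)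
    linarith
  have hxy : |g x - g y| / C ≤ |x - y| := (div_le_iff₀' hC).2 hup
  have hgain : c * ((1 - γ) * (|g x - g y| / C)) ≤ |g x - g z| :=
    (mul_le_mul_of_nonneg_left ((mul_le_mul_of_nonneg_left hxy (by linarith)).trans hxz) hc).trans
      hlow
  calc |g z - g y| = |g x - g y| - |g x - g z| := by linarith
    _ ≤ |g x - g y| - c * ((1 - γ) * (|g x - g y| / C)) := by linarith
    _ = (1 - (1 - γ) * c / C) * |g x - g y| := by ring

section Xi

variable {a b m σ σ' : ℝ}

lemma Xi_sub_Xi (ha : a ^ 2 < 1) (hb : b ^ 2 < 1) :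
    Xi a σ σ' - Xi b σ σ' = (a - b) * ((1 + a * b) / ((1 - a ^ 2) * (1 - b ^ 2))) / (σ * σ') := by
  have h1 : 1 - a ^ 2 ≠ 0 := by linarith
  have h2 : 1 - b ^ 2 ≠ 0 := by linarith
  unfold Xi
  field_simp
  ring

lemma one_le_div_mul_one_sub_sq (ha : a ^ 2 < 1) (hb : b ^ 2 < 1) :
    1 ≤ (1 + a * b) / ((1 - a ^ 2) * (1 - b ^ 2)) := by
  have h1 : 0 < 1 - a ^ 2 := by linarith
  have h2 : 0 < 1 - b ^ 2 := by linarith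
  rw [one_le_div (mul_pos h1 h2)]
  nlinarith [sq_nonneg (a + b), mul_nonneg (sq_nonneg a) h2.le,
      mul_nonneg (sq_nonneg b) h1.le]

lemma div_mul_one_sub_sq_le (hm : m < 1) (ha : |a| ≤ m) (hb : |b| ≤ m) :
    (1 + a * b) / ((1 - a ^ 2) * (1 - b ^ 2)) ≤ (1 + m ^ 2) / (1 - m ^ 2) ^ 2 := by
  have hm0 : 0 ≤ m := (abs_nonneg a).trans ha
  have ha2 : a ^ 2 ≤ m ^ 2 := sq_le_sq' (abs_le.1 ha).1 (abs_le.1 ha).2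
  have hb2 : b ^ 2 ≤ m ^ 2 := sq_le_sq' (abs_le.1 hb).1 (abs_le.1 hb).2
  have hab : a * b ≤ m ^ 2 := by nlinarith [sq_nonneg (a - b)]
  have hm2 : 0 < 1 - m ^ 2 := by nlinarith
  have hden : (1 - m ^ 2) ^ 2 ≤ (1 - a ^ 2) * (1 - b ^ 2) := by
    rw [sq]; exact mul_le_mul (by linarith) (by linarith) hm2.le (by linarith)
  calc (1 + a * b) / ((1 - a ^ 2) * (1 - b ^ 2)) ≤ (1 + m ^ 2) / ((1 - a ^ 2) * (1 - b ^ 2)) := by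
        gcongr
        nlinarith
    _ ≤ (1 + m ^ 2) / (1 - m ^ 2) ^ 2 := by gcongr

lemma abs_sub_le_abs_Xi_sub (hσσ' : 0 < σ * σ') (ha : a ∈ Ioo (-1) 1) (hb : b ∈ Ioo (-1) 1) :
    (σ * σ')⁻¹ * |a - b| ≤ |Xi a σ σ' - Xi b σ σ'| := by
  have ha2 := (sq_lt_one_iff_abs_lt_one _).2 (abs_lt.2 ha)
  have hb2 := (sq_lt_one_iff_abs_lt_one _).2 (abs_lt.2 hb)
  have hq := one_le_div_mul_one_sub_sq ha2 hb2
  rw [Xi_sub_Xi ha2 hb2, abs_div, abs_mul, abs_of_pos (zero_lt_one.trans_le hq),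
    abs_of_pos hσσ', inv_mul_eq_div]
  gcongr
  exact le_mul_of_one_le_right (abs_nonneg _) hq

lemma abs_Xi_sub_le (hσσ' : 0 < σ * σ') (hm : m < 1) (ha : |a| ≤ m) (hb : |b| ≤ m) :
    |Xi a σ σ' - Xi b σ σ'| ≤ (1 + m ^ 2) / (1 - m ^ 2) ^ 2 / (σ * σ') * |a - b| := by
  have ha2 := (sq_lt_one_iff_abs_lt_one _).2 (ha.trans_lt hm)
  have hb2 := (sq_lt_one_iff_abs_lt_one _).2 (hb.trans_lt hm)
  have hq := one_le_div_mul_one_sub_sq ha2 hb2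
  rw [Xi_sub_Xi ha2 hb2, abs_div, abs_mul, abs_of_pos (zero_lt_one.trans_le hq),
    abs_of_pos hσσ', div_mul_eq_mul_div, mul_comm _ |a - b|]
  gcongr |a - b| * ?_ / _
  exact div_mul_one_sub_sq_le hm ha hb

lemma strictMonoOn_Xi (hσσ' : 0 < σ * σ') : StrictMonoOn (fun ρ => Xi ρ σ σ') (Ioo (-1) 1) := by
  intro a ha b hb hab
  have ha2 := (sq_lt_one_iff_abs_lt_one _).2 (abs_lt.2 ha)
  have hb2 := (sq_lt_one_iff_abs_lt_one _).2 (abs_lt.2 hb)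
  have hq := one_le_div_mul_one_sub_sq hb2 ha2
  have : 0 < Xi b σ σ' - Xi a σ σ' := by
    rw [Xi_sub_Xi hb2 ha2]
    exact div_pos (mul_pos (sub_pos.2 hab) (zero_lt_one.trans_le hq)) hσσ'
  exact sub_pos.1 this

end Xi

theorem Xi_contraction_bound_general (σ σ' ρstar ρ γ ρnew m l : ℝ)
    (hσ : 0 < σ) (hσ' : 0 < σ')
    (hρstar : ρstar ∈ Set.Ico (0 : ℝ) 1)
    (hρ : ρ ∈ Set.Ioo (-1 : ℝ) 1)
    (hγ : γ ∈ Set.Ico (0 : ℝ) 1)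
    (hseg : ρnew ∈ Set.uIcc ρstar ρ)
    (hcontr : |ρnew - ρstar| ≤ γ * |ρ - ρstar|)
    (hm : m = max ρstar |ρ|)
    (hl : l = 1 - (1 - γ) * (1 - m ^ 2) ^ 2 / (1 + m ^ 2)) :
    l < 1 ∧ |Xi ρnew σ σ' - Xi ρstar σ σ'| ≤ l * |Xi ρ σ σ' - Xi ρstar σ σ'| := by
  obtain ⟨hρstar0, hρstar1⟩ := hρstar
  have hm1 : m < 1 := hm ▸ max_lt hρstar1 (abs_lt.2 hρ)
  have hρstar_m : |ρstar| ≤ m := by rw [abs_of_nonneg hρstar0, hm]; exact le_max_left _ _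
  have hρ_m : |ρ| ≤ m := hm ▸ le_max_right _ _
  have hm2 : 0 < 1 - m ^ 2 := by nlinarith [(abs_nonneg ρ).trans hρ_m]
  have hγ1 : 0 < 1 - γ := sub_pos.2 hγ.2
  refine ⟨hl ▸ sub_lt_self _ (by positivity), ?_⟩
  have hs : 0 < σ * σ' := mul_pos hσ hσ'
  have hI : uIcc ρstar ρ ⊆ Ioo (-1) 1 := ordConnected_Ioo.uIcc_subset ⟨by linarith, hρstar1⟩ hρ
  have key := abs_sub_le_of_mem_uIcc_of_lipschitz_bounds
    ((strictMonoOn_Xi hs).monotoneOn.mono hI) hseg hcontr hγ.2.le (inv_nonneg.2 hs.le)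
    (by positivity) (abs_sub_le_abs_Xi_sub hs hρ (hI hseg)) (abs_Xi_sub_le hs hm1 hρ_m hρstar_m)
  convert key using 2
  rw [hl]
  field_simp

/-- Fix `σ, σ' > 0`. Let `ρ* ∈ [0,1)`, `ρ ∈ (-1,1)`, `γ ∈ [0,1)` and let
`ρ_new ∈ (-1,1)` lie on the closed segment between `ρ*` and `ρ` with
`|ρ_new - ρ*| ≤ γ|ρ - ρ*|`. With `m = max{ρ*, |ρ|}` and
`l = 1 - (1-γ)(1-m²)²/(1+m²)`, one has `l < 1` and
`|Ξ(ρ_new, σ, σ') - Ξ(ρ*, σ, σ')| ≤ l·|Ξ(ρ, σ, σ') - Ξ(ρ*, σ, σ')|`. -/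
theorem Xi_contraction_bound (σ σ' ρstar ρ γ ρnew m l : ℝ)
    (hσ : 0 < σ) (hσ' : 0 < σ')
    (hρstar : ρstar ∈ Set.Ico (0 : ℝ) 1)
    (hρ : ρ ∈ Set.Ioo (-1 : ℝ) 1)
    (hγ : γ ∈ Set.Ico (0 : ℝ) 1)
    (hρnew : ρnew ∈ Set.Ioo (-1 : ℝ) 1)
    (hseg : ρnew ∈ Set.uIcc ρstar ρ)
    (hcontr : |ρnew - ρstar| ≤ γ * |ρ - ρstar|)
    (hm : m = max ρstar |ρ|)
    (hl : l = 1 - (1 - γ) * (1 - m ^ 2) ^ 2 / (1 + m ^ 2)) :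
    l < 1 ∧ |Xi ρnew σ σ' - Xi ρstar σ σ'| ≤ l * |Xi ρ σ σ' - Xi ρstar σ σ'| :=
  Xi_contraction_bound_general σ σ' ρstar ρ γ ρnew m l hσ hσ' hρstar hρ hγ hseg hcontr hm hl
end

section
/- Let σ₀, σ₁, s, s' > 0 and ρ̃, ρ' ∈ (-1,1) satisfy the two conditional-matching equations of an IPF step: (σ₀/s)·ρ̃ = (s'/σ₁)·ρ' and (1 - ρ̃²)·σ₀² = (1 - ρ'²)·(s')². Then the optimality coefficient is unchanged: Ξ(ρ̃, σ₀, s) = Ξ(ρ', s', σ₁), i.e., ρ̃/(σ₀ s (1 - ρ̃²)) = ρ'/(s' σ₁ (1 - ρ'²)). -/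
/-- If `(ρ̃, σ₀, s)` and `(ρ', s', σ₁)` satisfy the conditional-matching
equations of an IPF step, `(σ₀/s)ρ̃ = (s'/σ₁)ρ'` and `(1 - ρ̃²)σ₀² = (1 - ρ'²)(s')²`,
then the optimality coefficient is unchanged: `Ξ(ρ̃, σ₀, s) = Ξ(ρ', s', σ₁)`. -/
theorem IPF_preserves_Xi (σ₀ σ₁ s s' ρt ρ' : ℝ)
    (hσ₀ : 0 < σ₀) (hσ₁ : 0 < σ₁) (hs : 0 < s) (hs' : 0 < s')
    (hρt : ρt ∈ Set.Ioo (-1 : ℝ) 1) (hρ' : ρ' ∈ Set.Ioo (-1 : ℝ) 1)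
    (h1 : (σ₀ / s) * ρt = (s' / σ₁) * ρ')
    (h2 : (1 - ρt ^ 2) * σ₀ ^ 2 = (1 - ρ' ^ 2) * s' ^ 2) :
    Xi ρt σ₀ s = Xi ρ' s' σ₁ := by
  obtain ⟨ht1, ht2⟩ := hρt
  obtain ⟨hp1, hp2⟩ := hρ'
  have hnt : (1 : ℝ) - ρt ^ 2 > 0 := by nlinarith
  have hnp : (1 : ℝ) - ρ' ^ 2 > 0 := by nlinarith
  have h1' : σ₀ * ρt * σ₁ = s * (s' * ρ') := by
    field_simp at h1; linarith
  unfold Xi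
  rw [div_eq_div_iff (by positivity) (by positivity)]
  have key : σ₀ * (ρt * (s' * σ₁ * (1 - ρ' ^ 2))) = σ₀ * (ρ' * (σ₀ * s * (1 - ρt ^ 2))) := by
    linear_combination (s' * (1 - ρ' ^ 2)) * h1' - (s * ρ') * h2
  have := mul_left_cancel₀ (ne_of_gt hσ₀) key
  linarith
end

section
/- Let σ₀, σ₁, s > 0 and ρ̃, ρ̂ ∈ [-1,1] with ρ̃² < 1 or s ≠ σ₁. Define (s')² = σ₀²·(1 - ρ̃²·(1 - σ₁²/s²)) and (s'')² = σ₁²·(1 - ρ̂²·(1 - σ₀²/(s')²)). Then (s')² > 0, and with r = s²/σ₁² - 1 and r'' = (s'')²/σ₁² - 1 one has the exact recursion r'' = ρ̂²ρ̃² r / (1 + (1 - ρ̃²) r), and consequently the bound |(s'')² - σ₁²| ≤ ρ̂² · |s² - σ₁²|. -/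
/-- Variance updates of the two IPF projection steps inside one IPMF step.
With `(s')² = σ₀²(1 - ρ̃²(1 - σ₁²/s²))` and `(s'')² = σ₁²(1 - ρ̂²(1 - σ₀²/(s')²))`, one has
`(s')² > 0`, the exact recursion `r'' = ρ̂²ρ̃² r / (1 + (1 - ρ̃²) r)` for
`r = s²/σ₁² - 1`, `r'' = (s'')²/σ₁² - 1`, and the bound `|(s'')² - σ₁²| ≤ ρ̂²|s² - σ₁²|`. -/
theorem IPF_variance_update (σ₀ σ₁ s ρt ρh s'2 s''2 r r'' : ℝ)
    (hσ₀ : 0 < σ₀) (hσ₁ : 0 < σ₁) (hs : 0 < s)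
    (hρt : ρt ∈ Set.Icc (-1 : ℝ) 1) (hρh : ρh ∈ Set.Icc (-1 : ℝ) 1)
    (hcase : ρt ^ 2 < 1 ∨ s ≠ σ₁)
    (hs'2 : s'2 = σ₀ ^ 2 * (1 - ρt ^ 2 * (1 - σ₁ ^ 2 / s ^ 2)))
    (hs''2 : s''2 = σ₁ ^ 2 * (1 - ρh ^ 2 * (1 - σ₀ ^ 2 / s'2)))
    (hr : r = s ^ 2 / σ₁ ^ 2 - 1)
    (hr'' : r'' = s''2 / σ₁ ^ 2 - 1) :
    0 < s'2 ∧
    r'' = ρh ^ 2 * ρt ^ 2 * r / (1 + (1 - ρt ^ 2) * r) ∧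
    |s''2 - σ₁ ^ 2| ≤ ρh ^ 2 * |s ^ 2 - σ₁ ^ 2| := by
  obtain ⟨ht1, ht2⟩ := hρt
  have hρt1 : ρt ^ 2 ≤ 1 := by nlinarith
  have hs2 : (0:ℝ) < s ^ 2 := by positivity
  have hσ₁2 : (0:ℝ) < σ₁ ^ 2 := by positivity
  have hσ₀2 : (0:ℝ) < σ₀ ^ 2 := by positivity
  set D : ℝ := (1 - ρt ^ 2) * s ^ 2 + ρt ^ 2 * σ₁ ^ 2 with hDdef
  have hD : 0 < D := by
    rcases lt_or_ge (s ^ 2) (σ₁ ^ 2) with h | h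
    · nlinarith [sq_nonneg ρt]
    · nlinarith [sq_nonneg ρt]
  have hs'2' : s'2 = σ₀ ^ 2 * D / s ^ 2 := by
    rw [hs'2, hDdef]; field_simp; ring
  have hpos : 0 < s'2 := by rw [hs'2']; positivity
  have hs''2' : s''2 - σ₁ ^ 2 = ρh ^ 2 * ρt ^ 2 * σ₁ ^ 2 * (s ^ 2 - σ₁ ^ 2) / D := by
    rw [hs''2, hs'2']
    rw [eq_div_iff hD.ne']
    field_simp
    ring
  refine ⟨hpos, ?_, ?_⟩
  · have hden : 1 + (1 - ρt ^ 2) * r = D / σ₁ ^ 2 := by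
      rw [hr, hDdef]; field_simp; ring
    have hs2eq : s''2 = σ₁ ^ 2 + ρh ^ 2 * ρt ^ 2 * σ₁ ^ 2 * (s ^ 2 - σ₁ ^ 2) / D := by
      linarith [hs''2']
    rw [hr'', hden, hr, hs2eq]
    field_simp
    ring
  · rw [hs''2', abs_div, abs_of_pos hD]
    rw [div_le_iff₀ hD]
    have h1 : |ρh ^ 2 * ρt ^ 2 * σ₁ ^ 2 * (s ^ 2 - σ₁ ^ 2)|
        = ρh ^ 2 * ρt ^ 2 * σ₁ ^ 2 * |s ^ 2 - σ₁ ^ 2| := by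
      rw [abs_mul, abs_of_nonneg (by positivity : (0:ℝ) ≤ ρh ^ 2 * ρt ^ 2 * σ₁ ^ 2)]
    rw [h1]
    have h2 : ρt ^ 2 * σ₁ ^ 2 ≤ D := by nlinarith [sq_nonneg ρt]
    have h3 := mul_le_mul_of_nonneg_left h2
      (mul_nonneg (sq_nonneg ρh) (abs_nonneg (s ^ 2 - σ₁ ^ 2)))
    linarith [h3]
end

section
/- Let σ₀, σ₁, s > 0, ρ̃, ρ̂ ∈ [-1,1], and μ₀, μ₁, ν ∈ ℝ. Define (s')² = σ₀²·(1 - ρ̃²·(1 - σ₁²/s²)) (so that s' > 0), ν' = μ₀ - (σ₀/s)·ρ̃·(ν - μ₁), and ν'' = μ₁ - (σ₁/s')·ρ̂·(ν' - μ₀). Then |ν'' - μ₁| ≤ |ρ̂| · |ν - μ₁|. -/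
/-! Composing the two updates scales `ν - μ₁` by `ρ̂ · σ₁σ₀ρ̃ / (s's)`, and the variance
formula gives `(s's)² = (σ₁σ₀ρ̃)² + σ₀²s²(1 - ρ̃²)`, so the factor besides `ρ̂` has absolute value at most `1`. -/

noncomputable def ipfMeanStep (m m' a b ρ x : ℝ) : ℝ := m - (a / b) * ρ * (x - m')

theorem ipfMeanStep_ipfMeanStep_sub (μ₀ μ₁ σ₀ σ₁ s s' ρt ρh ν : ℝ) :
    ipfMeanStep μ₁ μ₀ σ₁ s' ρh (ipfMeanStep μ₀ μ₁ σ₀ s ρt ν) - μ₁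
      = σ₁ * σ₀ * ρt / (s' * s) * (ρh * (ν - μ₁)) := by
  unfold ipfMeanStep
  ring

theorem abs_div_le_one_of_sq_le {K : Type*} [Field K] [LinearOrder K] [IsStrictOrderedRing K]
    {a b : K} (h : a ^ 2 ≤ b ^ 2) : |a / b| ≤ 1 := by
  rw [abs_div]
  exact div_le_one_of_le₀ (sq_le_sq.mp h) (abs_nonneg b)

theorem sq_le_sq_of_ipf_variance {σ₀ σ₁ s s' ρ : ℝ} (hs : s ≠ 0) (hρ : ρ ^ 2 ≤ 1)
    (hs' : s' ^ 2 = σ₀ ^ 2 * (1 - ρ ^ 2 * (1 - σ₁ ^ 2 / s ^ 2))) :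
    (σ₁ * σ₀ * ρ) ^ 2 ≤ (s' * s) ^ 2 := by
  have hsplit : (s' * s) ^ 2 = (σ₁ * σ₀ * ρ) ^ 2 + (σ₀ * s) ^ 2 * (1 - ρ ^ 2) := by
    rw [mul_pow, hs']
    field_simp
    ring
  rw [hsplit]
  exact le_add_of_nonneg_right (mul_nonneg (sq_nonneg _) (sub_nonneg.mpr hρ))

theorem IPF_mean_update_general (σ₀ σ₁ s s' ρt ρh μ₀ μ₁ ν ν' ν'' : ℝ)
    (hs : 0 < s)
    (hρt : ρt ∈ Set.Icc (-1 : ℝ) 1)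
    (hs'2 : s' ^ 2 = σ₀ ^ 2 * (1 - ρt ^ 2 * (1 - σ₁ ^ 2 / s ^ 2)))
    (hν' : ν' = μ₀ - (σ₀ / s) * ρt * (ν - μ₁))
    (hν'' : ν'' = μ₁ - (σ₁ / s') * ρh * (ν' - μ₀)) :
    |ν'' - μ₁| ≤ |ρh| * |ν - μ₁| := by
  have hρt2 : ρt ^ 2 ≤ 1 := sq_le_one_iff_abs_le_one ρt |>.mpr (abs_le.mpr hρt)
  have hfactor : |σ₁ * σ₀ * ρt / (s' * s)| ≤ 1 :=
    abs_div_le_one_of_sq_le (sq_le_sq_of_ipf_variance hs.ne' hρt2 hs'2)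
  have hcomp : ν'' - μ₁ = σ₁ * σ₀ * ρt / (s' * s) * (ρh * (ν - μ₁)) := by
    subst hν' hν''
    exact ipfMeanStep_ipfMeanStep_sub μ₀ μ₁ σ₀ σ₁ s s' ρt ρh ν
  rw [hcomp, abs_mul, ← abs_mul ρh]
  exact mul_le_of_le_one_left (abs_nonneg _) hfactor

/-- Mean updates of the two IPF projection steps inside one IPMF step.
With `(s')² = σ₀²(1 - ρ̃²(1 - σ₁²/s²))` (and `s' > 0`), `ν' = μ₀ - (σ₀/s)ρ̃(ν - μ₁)` and
`ν'' = μ₁ - (σ₁/s')ρ̂(ν' - μ₀)`, one has `|ν'' - μ₁| ≤ |ρ̂|·|ν - μ₁|`. -/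
theorem IPF_mean_update (σ₀ σ₁ s s' ρt ρh μ₀ μ₁ ν ν' ν'' : ℝ)
    (hσ₀ : 0 < σ₀) (hσ₁ : 0 < σ₁) (hs : 0 < s)
    (hρt : ρt ∈ Set.Icc (-1 : ℝ) 1) (hρh : ρh ∈ Set.Icc (-1 : ℝ) 1)
    (hs' : 0 < s')
    (hs'2 : s' ^ 2 = σ₀ ^ 2 * (1 - ρt ^ 2 * (1 - σ₁ ^ 2 / s ^ 2)))
    (hν' : ν' = μ₀ - (σ₀ / s) * ρt * (ν - μ₁))
    (hν'' : ν'' = μ₁ - (σ₁ / s') * ρh * (ν' - μ₀)) :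
    |ν'' - μ₁| ≤ |ρh| * |ν - μ₁| :=
  IPF_mean_update_general σ₀ σ₁ s s' ρt ρh μ₀ μ₁ ν ν' ν'' hs hρt hs'2 hν' hν''
end
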